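/- The seven 8-dimensional real Lie algebras g₈³⁴, g₈³⁵, g₈³⁶, g₈³⁷, g₈³⁸, g₈³⁹, g₈⁴⁰ are pairwise non-isomorphic. -/

import Mathlib

open Module

/-- The `k`-th standard coordinate vector in `ℝ⁸`. -/
def e8 (k : Fin 8) : Fin 8 → ℝ := Pi.single k 1

/-- Structure constants (for `i < j`) of `g₈³⁴`. -/
def c834 (i j : Fin 8) : Fin 8 → ℝ :=
  if (i, j) = (0, 2) then e8 1
  else if (i, j) = (1, 2) then -e8 0
  else if (i, j) = (0, 3) then -e8 0
  else if (i, j) = (1, 3) then -e8 1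
  else if (i, j) = (4, 6) then e8 5
  else if (i, j) = (5, 6) then -e8 4
  else if (i, j) = (4, 7) then -e8 4
  else if (i, j) = (5, 7) then -e8 5
  else 0

/-- Structure constants (for `i < j`) of `g₈³⁵`. -/
def c835 (i j : Fin 8) : Fin 8 → ℝ :=
  if (i, j) = (0, 2) then e8 1
  else if (i, j) = (1, 2) then -e8 0
  else if (i, j) = (0, 3) then -e8 0
  else if (i, j) = (1, 3) then -e8 1
  else if (i, j) = (4, 5) then e8 5
  else if (i, j) = (6, 7) then e8 7
  else 0

/-- Structure constants (for `i < j`) of `g₈³⁶`. -/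
def c836 (i j : Fin 8) : Fin 8 → ℝ :=
  if (i, j) = (0, 1) then e8 3
  else if (i, j) = (0, 2) then e8 4
  else if (i, j) = (0, 5) then -e8 0
  else if (i, j) = (3, 5) then -e8 3
  else if (i, j) = (4, 5) then -e8 4
  else if (i, j) = (1, 6) then e8 2
  else if (i, j) = (2, 6) then -e8 1
  else if (i, j) = (3, 6) then e8 4
  else if (i, j) = (4, 6) then -e8 3
  else if (i, j) = (1, 7) then -e8 1
  else if (i, j) = (2, 7) then -e8 2
  else if (i, j) = (3, 7) then -e8 3
  else if (i, j) = (4, 7) then -e8 4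
  else 0

/-- Structure constants (for `i < j`) of `g₈³⁷`. -/
def c837 (i j : Fin 8) : Fin 8 → ℝ :=
  if (i, j) = (0, 1) then e8 4
  else if (i, j) = (2, 3) then e8 4
  else if (i, j) = (0, 5) then -e8 0
  else if (i, j) = (1, 5) then -e8 1
  else if (i, j) = (4, 5) then (-2 : ℝ) • e8 4
  else if (i, j) = (0, 6) then e8 1
  else if (i, j) = (1, 6) then -e8 0
  else if (i, j) = (2, 7) then e8 3
  else if (i, j) = (3, 7) then -e8 2
  else 0

/-- Structure constants (for `i < j`) of `g₈³⁸`. -/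
def c838 (i j : Fin 8) : Fin 8 → ℝ :=
  if (i, j) = (0, 1) then e8 4
  else if (i, j) = (2, 3) then e8 4
  else if (i, j) = (0, 5) then -e8 0
  else if (i, j) = (1, 5) then -e8 1
  else if (i, j) = (4, 5) then (-2 : ℝ) • e8 4
  else if (i, j) = (0, 6) then -e8 0
  else if (i, j) = (1, 6) then e8 1
  else if (i, j) = (2, 7) then e8 3
  else if (i, j) = (3, 7) then -e8 2
  else 0

/-- Structure constants (for `i < j`) of `g₈³⁹`. -/
def c839 (i j : Fin 8) : Fin 8 → ℝ :=
  if (i, j) = (0, 1) then e8 2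
  else if (i, j) = (0, 2) then e8 3
  else if (i, j) = (0, 3) then e8 4
  else if (i, j) = (1, 2) then -e8 5
  else if (i, j) = (1, 5) then -e8 4
  else if (i, j) = (0, 6) then -e8 0
  else if (i, j) = (1, 6) then -e8 1
  else if (i, j) = (2, 6) then (-2 : ℝ) • e8 2
  else if (i, j) = (3, 6) then (-3 : ℝ) • e8 3
  else if (i, j) = (4, 6) then (-4 : ℝ) • e8 4
  else if (i, j) = (5, 6) then (-3 : ℝ) • e8 5
  else if (i, j) = (0, 7) then -e8 1
  else if (i, j) = (1, 7) then e8 0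
  else if (i, j) = (3, 7) then e8 5
  else if (i, j) = (5, 7) then -e8 3
  else 0

/-- Structure constants (for `i < j`) of `g₈⁴⁰`. -/
def c840 (i j : Fin 8) : Fin 8 → ℝ :=
  if (i, j) = (0, 1) then e8 3
  else if (i, j) = (0, 2) then e8 4
  else if (i, j) = (0, 3) then e8 5
  else if (i, j) = (1, 2) then e8 5
  else if (i, j) = (1, 3) then -e8 4
  else if (i, j) = (0, 6) then -e8 0
  else if (i, j) = (1, 6) then -e8 1
  else if (i, j) = (2, 6) then (-2 : ℝ) • e8 2
  else if (i, j) = (3, 6) then (-2 : ℝ) • e8 3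
  else if (i, j) = (4, 6) then (-3 : ℝ) • e8 4
  else if (i, j) = (5, 6) then (-3 : ℝ) • e8 5
  else if (i, j) = (0, 7) then -e8 1
  else if (i, j) = (1, 7) then e8 0
  else if (i, j) = (4, 7) then -e8 5
  else if (i, j) = (5, 7) then e8 4
  else 0


section Machinery

variable {L L' : Type} [LieRing L] [LieAlgebra ℝ L] [LieRing L'] [LieAlgebra ℝ L']

/-- Full antisymmetrized structure-constant table. -/
def dd (c : Fin 8 → Fin 8 → Fin 8 → ℝ) (i j : Fin 8) : Fin 8 → ℝ :=
  if i < j then c i j else if j < i then -(c j i) else 0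

lemma brkt (b : Basis (Fin 8) ℝ L) (c : Fin 8 → Fin 8 → Fin 8 → ℝ)
    (h : ∀ i j : Fin 8, i < j → ⁅b i, b j⁆ = ∑ k, c i j k • b k)
    (i j : Fin 8) : ⁅b i, b j⁆ = ∑ k, dd c i j k • b k := by
  rcases lt_trichotomy i j with hij | rfl | hij
  · rw [h i j hij]; simp [dd, hij]
  · simp [dd, lt_irrefl]
  · rw [← lie_skew, h j i hij]
    simp [dd, hij, lt_asymm hij, neg_smul, Finset.sum_neg_distrib]

lemma killing_entry (b : Basis (Fin 8) ℝ L) (c : Fin 8 → Fin 8 → Fin 8 → ℝ)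
    (h : ∀ i j : Fin 8, i < j → ⁅b i, b j⁆ = ∑ k, c i j k • b k) (a e : Fin 8) :
    killingForm ℝ L (b a) (b e) = ∑ i, ∑ k, dd c e i k * dd c a k i := by
  rw [killingForm_apply_apply, LinearMap.trace_eq_matrix_trace ℝ b, Matrix.trace]
  refine Finset.sum_congr rfl fun i _ => ?_
  rw [Matrix.diag_apply, LinearMap.toMatrix_apply, LinearMap.comp_apply,
    LieAlgebra.ad_apply, LieAlgebra.ad_apply, brkt b c h e i]
  have : ⁅b a, ∑ k, dd c e i k • b k⁆ = ∑ k, dd c e i k • ⁅b a, b k⁆ := by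
    simp only [← LieAlgebra.ad_apply (R := ℝ) (L := L), map_sum, map_smul]
  rw [this]
  simp_rw [brkt b c h a]
  simp [Finset.smul_sum, Finsupp.finset_sum_apply, Basis.repr_self, Finsupp.single_apply,
    Finset.sum_ite_eq, mul_comm]

lemma killing_qf (b : Basis (Fin 8) ℝ L) (v : L) :
    killingForm ℝ L v v =
      ∑ i, ∑ j, b.repr v i * b.repr v j * killingForm ℝ L (b i) (b j) := by
  conv_lhs => rw [← b.sum_repr v]
  simp only [map_sum, map_smul, LinearMap.sum_apply, LinearMap.smul_apply, smul_eq_mul]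
  rw [Finset.sum_comm]
  refine Finset.sum_congr rfl fun i _ => ?_
  rw [Finset.mul_sum]
  exact Finset.sum_congr rfl fun j _ => by ring

/-- The span of all brackets. -/
def sp1 (L : Type) [LieRing L] [LieAlgebra ℝ L] : Submodule ℝ L :=
  Submodule.span ℝ {z : L | ∃ x y : L, ⁅x, y⁆ = z}

/-- The span of all brackets of elements of `sp1`. -/
def sp2 (L : Type) [LieRing L] [LieAlgebra ℝ L] : Submodule ℝ L :=
  Submodule.span ℝ {z : L | ∃ x ∈ sp1 L, ∃ y ∈ sp1 L, ⁅x, y⁆ = z}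

lemma map_sp1 (e : L ≃ₗ⁅ℝ⁆ L') :
    (sp1 L).map (e.toLinearEquiv : L →ₗ[ℝ] L') = sp1 L' := by
  rw [sp1, Submodule.map_span, sp1]
  congr 1
  ext z
  constructor
  · rintro ⟨w, ⟨x, y, rfl⟩, rfl⟩
    exact ⟨e x, e y, by simp [LieEquiv.map_lie]⟩
  · rintro ⟨x, y, rfl⟩
    exact ⟨⁅e.symm x, e.symm y⁆, ⟨_, _, rfl⟩, by simp [LieEquiv.map_lie]⟩

lemma mem_sp1_of_equiv (e : L ≃ₗ⁅ℝ⁆ L') {x : L} (hx : x ∈ sp1 L) : e x ∈ sp1 L' := by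
  rw [← map_sp1 e]
  exact Submodule.mem_map_of_mem hx

lemma map_sp2 (e : L ≃ₗ⁅ℝ⁆ L') :
    (sp2 L).map (e.toLinearEquiv : L →ₗ[ℝ] L') = sp2 L' := by
  rw [sp2, Submodule.map_span, sp2]
  congr 1
  ext z
  constructor
  · rintro ⟨w, ⟨x, hx, y, hy, rfl⟩, rfl⟩
    exact ⟨e x, mem_sp1_of_equiv e hx, e y, mem_sp1_of_equiv e hy, by simp [LieEquiv.map_lie]⟩
  · rintro ⟨x, hx, y, hy, rfl⟩
    refine ⟨⁅e.symm x, e.symm y⁆, ⟨_, mem_sp1_of_equiv e.symm hx, _,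
      mem_sp1_of_equiv e.symm hy, rfl⟩, by simp [LieEquiv.map_lie]⟩

lemma finrank_sp1_eq (e : L ≃ₗ⁅ℝ⁆ L') : finrank ℝ (sp1 L) = finrank ℝ (sp1 L') := by
  rw [← map_sp1 e, LinearEquiv.finrank_map_eq]

lemma finrank_sp2_eq (e : L ≃ₗ⁅ℝ⁆ L') : finrank ℝ (sp2 L) = finrank ℝ (sp2 L') := by
  rw [← map_sp2 e, LinearEquiv.finrank_map_eq]

lemma bracket_span_mem {s t : Set L} {N : Submodule ℝ L}
    (h : ∀ x ∈ s, ∀ y ∈ t, ⁅x, y⁆ ∈ N) {x y : L}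
    (hx : x ∈ Submodule.span ℝ s) (hy : y ∈ Submodule.span ℝ t) : ⁅x, y⁆ ∈ N := by
  induction hx using Submodule.span_induction with
  | mem x hxs =>
    induction hy using Submodule.span_induction with
    | mem y hyt => exact h _ hxs _ hyt
    | zero => simp
    | add y z _ _ hy hz => rw [lie_add]; exact N.add_mem hy hz
    | smul a y _ hy => rw [lie_smul]; exact N.smul_mem a hy
  | zero => simp
  | add x z _ _ hx hz => rw [add_lie]; exact N.add_mem hx hz
  | smul a x _ hx => rw [smul_lie]; exact N.smul_mem a hx

lemma sp1_le_span (b : Basis (Fin 8) ℝ L) (s : Finset (Fin 8))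
    (hb : ∀ i j : Fin 8, ⁅b i, b j⁆ ∈ Submodule.span ℝ (b '' ↑s)) :
    sp1 L ≤ Submodule.span ℝ (b '' ↑s) := by
  rw [sp1, Submodule.span_le]
  rintro z ⟨x, y, rfl⟩
  refine bracket_span_mem (s := Set.range b) (t := Set.range b) ?_ ?_ ?_
  · rintro x ⟨i, rfl⟩ y ⟨j, rfl⟩; exact hb i j
  · rw [b.span_eq]; exact Submodule.mem_top
  · rw [b.span_eq]; exact Submodule.mem_top

lemma finrank_le_of_le_span (b : Basis (Fin 8) ℝ L) (s : Finset (Fin 8))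
    {N : Submodule ℝ L} (hN : N ≤ Submodule.span ℝ (b '' ↑s)) :
    finrank ℝ N ≤ s.card := by
  classical
  have : FiniteDimensional ℝ L := Module.Finite.of_basis b
  have h1 : finrank ℝ N ≤ finrank ℝ (Submodule.span ℝ (b '' ↑s)) :=
    Submodule.finrank_mono hN
  rw [← Finset.coe_image] at h1
  exact h1.trans ((finrank_span_finset_le_card (s.image b)).trans Finset.card_image_le)

lemma finrank_sp1_le (b : Basis (Fin 8) ℝ L) (s : Finset (Fin 8))
    (hb : ∀ i j : Fin 8, ⁅b i, b j⁆ ∈ Submodule.span ℝ (b '' ↑s)) :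
    finrank ℝ (sp1 L) ≤ s.card :=
  finrank_le_of_le_span b s (sp1_le_span b s hb)

lemma finrank_sp2_le (b : Basis (Fin 8) ℝ L) (s t : Finset (Fin 8))
    (hb : ∀ i j : Fin 8, ⁅b i, b j⁆ ∈ Submodule.span ℝ (b '' ↑s))
    (hb2 : ∀ i ∈ s, ∀ j ∈ s, ⁅b i, b j⁆ ∈ Submodule.span ℝ (b '' ↑t)) :
    finrank ℝ (sp2 L) ≤ t.card := by
  refine finrank_le_of_le_span b t ?_
  rw [sp2, Submodule.span_le]
  rintro z ⟨x, hx, y, hy, rfl⟩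
  refine bracket_span_mem (s := b '' ↑s) (t := b '' ↑s) ?_
    (sp1_le_span b s hb hx) (sp1_le_span b s hb hy)
  rintro x ⟨i, hi, rfl⟩ y ⟨j, hj, rfl⟩
  exact hb2 i (Finset.mem_coe.mp hi) j (Finset.mem_coe.mp hj)

lemma finrank_ge_of_mem {N : Submodule ℝ L} (b : Basis (Fin 8) ℝ L)
    {m : ℕ} (f : Fin m → Fin 8) (hf : Function.Injective f)
    (hmem : ∀ i, b (f i) ∈ N) : m ≤ finrank ℝ N := by
  have : FiniteDimensional ℝ L := Module.Finite.of_basis b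
  have li : LinearIndependent ℝ (b ∘ f) := b.linearIndependent.comp f hf
  have h1 : Submodule.span ℝ (Set.range (b ∘ f)) ≤ N := by
    rw [Submodule.span_le]
    rintro z ⟨i, rfl⟩
    exact hmem i
  have h2 := Submodule.finrank_mono h1
  rwa [finrank_span_eq_card li, Fintype.card_fin] at h2

lemma clash1 (e : L ≃ₗ⁅ℝ⁆ L') {m n : ℕ}
    (hA : finrank ℝ (sp1 L) ≤ m) (hB : n ≤ finrank ℝ (sp1 L')) (hmn : m < n) : False := by
  have := finrank_sp1_eq e; omega

lemma clash2 (e : L ≃ₗ⁅ℝ⁆ L') {m n : ℕ}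
    (hA : finrank ℝ (sp2 L) ≤ m) (hB : n ≤ finrank ℝ (sp2 L')) (hmn : m < n) : False := by
  have := finrank_sp2_eq e; omega

/-- Transported 2-dim positive-definite plane against a nonpositive hyperplane. -/
lemma killing_clash (e : L ≃ₗ⁅ℝ⁆ L') (b' : Basis (Fin 8) ℝ L') (r : Fin 8) (u v : L)
    (cu cv : ℝ) (hcu : 0 < cu) (hcv : 0 < cv)
    (huu : killingForm ℝ L u u = cu) (huv : killingForm ℝ L u v = 0)
    (hvu : killingForm ℝ L v u = 0) (hvv : killingForm ℝ L v v = cv)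
    (hneg : ∀ w : L', b'.repr w r = 0 → killingForm ℝ L' w w ≤ 0) : False := by
  have hxx : killingForm ℝ L' (e u) (e u) = cu := by
    rw [LieAlgebra.killingForm_of_equiv_apply]; exact huu
  have hxy : killingForm ℝ L' (e u) (e v) = 0 := by
    rw [LieAlgebra.killingForm_of_equiv_apply]; exact huv
  have hyx : killingForm ℝ L' (e v) (e u) = 0 := by
    rw [LieAlgebra.killingForm_of_equiv_apply]; exact hvu
  have hyy : killingForm ℝ L' (e v) (e v) = cv := by
    rw [LieAlgebra.killingForm_of_equiv_apply]; exact hvv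
  have hv0 : b'.repr ((b'.repr (e v) r) • e u - (b'.repr (e u) r) • e v) r = 0 := by
    simp only [map_sub, map_smul, Finsupp.coe_sub, Pi.sub_apply, Finsupp.coe_smul,
      Pi.smul_apply, smul_eq_mul]
    ring
  have hle := hneg _ hv0
  have hexp : killingForm ℝ L' ((b'.repr (e v) r) • e u - (b'.repr (e u) r) • e v)
      ((b'.repr (e v) r) • e u - (b'.repr (e u) r) • e v) =
      (b'.repr (e v) r) * (b'.repr (e v) r) * killingForm ℝ L' (e u) (e u)
      - (b'.repr (e v) r) * (b'.repr (e u) r) * killingForm ℝ L' (e u) (e v)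
      - (b'.repr (e u) r) * (b'.repr (e v) r) * killingForm ℝ L' (e v) (e u)
      + (b'.repr (e u) r) * (b'.repr (e u) r) * killingForm ℝ L' (e v) (e v) := by
    simp only [map_sub, map_smul, LinearMap.sub_apply, LinearMap.smul_apply, smul_eq_mul]
    ring
  rw [hexp, hxx, hxy, hyx, hyy] at hle
  have hsq : (b'.repr (e u) r) * (b'.repr (e u) r) ≤ 0 := by
    nlinarith [mul_self_nonneg (b'.repr (e v) r), mul_self_nonneg (b'.repr (e u) r)]
  have hα : b'.repr (e u) r = 0 :=
    mul_self_eq_zero.mp (le_antisymm hsq (mul_self_nonneg _))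
  have hfin := hneg (e u) hα
  rw [hxx] at hfin
  linarith

/-- Transported 2-dim negative-definite plane against a nonnegative hyperplane. -/
lemma killing_clash' (e : L ≃ₗ⁅ℝ⁆ L') (b' : Basis (Fin 8) ℝ L') (r : Fin 8) (u v : L)
    (cu cv : ℝ) (hcu : cu < 0) (hcv : cv < 0)
    (huu : killingForm ℝ L u u = cu) (huv : killingForm ℝ L u v = 0)
    (hvu : killingForm ℝ L v u = 0) (hvv : killingForm ℝ L v v = cv)
    (hpos : ∀ w : L', b'.repr w r = 0 → 0 ≤ killingForm ℝ L' w w) : False := by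
  have hxx : killingForm ℝ L' (e u) (e u) = cu := by
    rw [LieAlgebra.killingForm_of_equiv_apply]; exact huu
  have hxy : killingForm ℝ L' (e u) (e v) = 0 := by
    rw [LieAlgebra.killingForm_of_equiv_apply]; exact huv
  have hyx : killingForm ℝ L' (e v) (e u) = 0 := by
    rw [LieAlgebra.killingForm_of_equiv_apply]; exact hvu
  have hyy : killingForm ℝ L' (e v) (e v) = cv := by
    rw [LieAlgebra.killingForm_of_equiv_apply]; exact hvv
  have hv0 : b'.repr ((b'.repr (e v) r) • e u - (b'.repr (e u) r) • e v) r = 0 := by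
    simp only [map_sub, map_smul, Finsupp.coe_sub, Pi.sub_apply, Finsupp.coe_smul,
      Pi.smul_apply, smul_eq_mul]
    ring
  have hle := hpos _ hv0
  have hexp : killingForm ℝ L' ((b'.repr (e v) r) • e u - (b'.repr (e u) r) • e v)
      ((b'.repr (e v) r) • e u - (b'.repr (e u) r) • e v) =
      (b'.repr (e v) r) * (b'.repr (e v) r) * killingForm ℝ L' (e u) (e u)
      - (b'.repr (e v) r) * (b'.repr (e u) r) * killingForm ℝ L' (e u) (e v)
      - (b'.repr (e u) r) * (b'.repr (e v) r) * killingForm ℝ L' (e v) (e u)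
      + (b'.repr (e u) r) * (b'.repr (e u) r) * killingForm ℝ L' (e v) (e v) := by
    simp only [map_sub, map_smul, LinearMap.sub_apply, LinearMap.smul_apply, smul_eq_mul]
    ring
  rw [hexp, hxx, hxy, hyx, hyy] at hle
  have hsq : (b'.repr (e u) r) * (b'.repr (e u) r) ≤ 0 := by
    nlinarith [mul_self_nonneg (b'.repr (e v) r), mul_self_nonneg (b'.repr (e u) r)]
  have hα : b'.repr (e u) r = 0 :=
    mul_self_eq_zero.mp (le_antisymm hsq (mul_self_nonneg _))
  have hfin := hpos (e u) hα
  rw [hxx] at hfin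
  linarith

end Machinery

section PerAlgebra

variable {L : Type} [LieRing L] [LieAlgebra ℝ L] (b : Basis (Fin 8) ℝ L)

set_option maxHeartbeats 1000000 in
lemma span1_c834 (h : ∀ i j : Fin 8, i < j → ⁅b i, b j⁆ = ∑ k, c834 i j k • b k) :
    ∀ i j : Fin 8, ⁅b i, b j⁆ ∈ Submodule.span ℝ (b '' ↑(({0,1,4,5} : Finset (Fin 8)))) := by
  intro i j
  rw [brkt b c834 h i j]
  refine Submodule.sum_mem _ fun k _ => ?_
  fin_cases k <;>
    first
      | exact Submodule.smul_mem _ _ (Submodule.subset_span (Set.mem_image_of_mem _ (by decide)))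
      | (simp (config := { decide := true }) [dd, c834, e8, ite_apply, Pi.single_apply])

set_option maxHeartbeats 1000000 in
lemma span1_c835 (h : ∀ i j : Fin 8, i < j → ⁅b i, b j⁆ = ∑ k, c835 i j k • b k) :
    ∀ i j : Fin 8, ⁅b i, b j⁆ ∈ Submodule.span ℝ (b '' ↑(({0,1,5,7} : Finset (Fin 8)))) := by
  intro i j
  rw [brkt b c835 h i j]
  refine Submodule.sum_mem _ fun k _ => ?_
  fin_cases k <;>
    first
      | exact Submodule.smul_mem _ _ (Submodule.subset_span (Set.mem_image_of_mem _ (by decide)))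
      | (simp (config := { decide := true }) [dd, c835, e8, ite_apply, Pi.single_apply])

set_option maxHeartbeats 1000000 in
lemma span1_c836 (h : ∀ i j : Fin 8, i < j → ⁅b i, b j⁆ = ∑ k, c836 i j k • b k) :
    ∀ i j : Fin 8, ⁅b i, b j⁆ ∈ Submodule.span ℝ (b '' ↑(({0,1,2,3,4} : Finset (Fin 8)))) := by
  intro i j
  rw [brkt b c836 h i j]
  refine Submodule.sum_mem _ fun k _ => ?_
  fin_cases k <;>
    first
      | exact Submodule.smul_mem _ _ (Submodule.subset_span (Set.mem_image_of_mem _ (by decide)))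
      | (simp (config := { decide := true }) [dd, c836, e8, ite_apply, Pi.single_apply])

set_option maxHeartbeats 1000000 in
lemma span1_c837 (h : ∀ i j : Fin 8, i < j → ⁅b i, b j⁆ = ∑ k, c837 i j k • b k) :
    ∀ i j : Fin 8, ⁅b i, b j⁆ ∈ Submodule.span ℝ (b '' ↑(({0,1,2,3,4} : Finset (Fin 8)))) := by
  intro i j
  rw [brkt b c837 h i j]
  refine Submodule.sum_mem _ fun k _ => ?_
  fin_cases k <;>
    first
      | exact Submodule.smul_mem _ _ (Submodule.subset_span (Set.mem_image_of_mem _ (by decide)))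
      | (simp (config := { decide := true }) [dd, c837, e8, ite_apply, Pi.single_apply])

set_option maxHeartbeats 1000000 in
lemma span1_c838 (h : ∀ i j : Fin 8, i < j → ⁅b i, b j⁆ = ∑ k, c838 i j k • b k) :
    ∀ i j : Fin 8, ⁅b i, b j⁆ ∈ Submodule.span ℝ (b '' ↑(({0,1,2,3,4} : Finset (Fin 8)))) := by
  intro i j
  rw [brkt b c838 h i j]
  refine Submodule.sum_mem _ fun k _ => ?_
  fin_cases k <;>
    first
      | exact Submodule.smul_mem _ _ (Submodule.subset_span (Set.mem_image_of_mem _ (by decide)))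
      | (simp (config := { decide := true }) [dd, c838, e8, ite_apply, Pi.single_apply])

set_option maxHeartbeats 1000000 in
lemma span1_c840 (h : ∀ i j : Fin 8, i < j → ⁅b i, b j⁆ = ∑ k, c840 i j k • b k) :
    ∀ i j : Fin 8, ⁅b i, b j⁆ ∈ Submodule.span ℝ (b '' ↑(({0,1,2,3,4,5} : Finset (Fin 8)))) := by
  intro i j
  rw [brkt b c840 h i j]
  refine Submodule.sum_mem _ fun k _ => ?_
  fin_cases k <;>
    first
      | exact Submodule.smul_mem _ _ (Submodule.subset_span (Set.mem_image_of_mem _ (by decide)))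
      | (simp (config := { decide := true }) [dd, c840, e8, ite_apply, Pi.single_apply])

set_option maxHeartbeats 4000000 in
lemma span2_c837 (h : ∀ i j : Fin 8, i < j → ⁅b i, b j⁆ = ∑ k, c837 i j k • b k) :
    ∀ i ∈ (({0,1,2,3,4} : Finset (Fin 8))), ∀ j ∈ (({0,1,2,3,4} : Finset (Fin 8))),
      ⁅b i, b j⁆ ∈ Submodule.span ℝ (b '' ↑(({4} : Finset (Fin 8)))) := by
  intro i hi j hj
  rw [brkt b c837 h i j]
  simp only [Finset.mem_insert, Finset.mem_singleton] at hi hj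
  rcases hi with rfl|rfl|rfl|rfl|rfl <;> rcases hj with rfl|rfl|rfl|rfl|rfl <;>
    refine Submodule.sum_mem _ fun k _ => ?_ <;> fin_cases k <;>
    first
      | exact Submodule.smul_mem _ _ (Submodule.subset_span (Set.mem_image_of_mem _ (by decide)))
      | (simp (config := { decide := true }) [dd, c837, e8, Pi.single_apply])

set_option maxHeartbeats 4000000 in
lemma span2_c838 (h : ∀ i j : Fin 8, i < j → ⁅b i, b j⁆ = ∑ k, c838 i j k • b k) :
    ∀ i ∈ (({0,1,2,3,4} : Finset (Fin 8))), ∀ j ∈ (({0,1,2,3,4} : Finset (Fin 8))),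
      ⁅b i, b j⁆ ∈ Submodule.span ℝ (b '' ↑(({4} : Finset (Fin 8)))) := by
  intro i hi j hj
  rw [brkt b c838 h i j]
  simp only [Finset.mem_insert, Finset.mem_singleton] at hi hj
  rcases hi with rfl|rfl|rfl|rfl|rfl <;> rcases hj with rfl|rfl|rfl|rfl|rfl <;>
    refine Submodule.sum_mem _ fun k _ => ?_ <;> fin_cases k <;>
    first
      | exact Submodule.smul_mem _ _ (Submodule.subset_span (Set.mem_image_of_mem _ (by decide)))
      | (simp (config := { decide := true }) [dd, c838, e8, Pi.single_apply])

set_option maxHeartbeats 4000000 in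
lemma span2_c840 (h : ∀ i j : Fin 8, i < j → ⁅b i, b j⁆ = ∑ k, c840 i j k • b k) :
    ∀ i ∈ (({0,1,2,3,4,5} : Finset (Fin 8))), ∀ j ∈ (({0,1,2,3,4,5} : Finset (Fin 8))),
      ⁅b i, b j⁆ ∈ Submodule.span ℝ (b '' ↑(({3,4,5} : Finset (Fin 8)))) := by
  intro i hi j hj
  rw [brkt b c840 h i j]
  simp only [Finset.mem_insert, Finset.mem_singleton] at hi hj
  rcases hi with rfl|rfl|rfl|rfl|rfl|rfl <;> rcases hj with rfl|rfl|rfl|rfl|rfl|rfl <;>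
    refine Submodule.sum_mem _ fun k _ => ?_ <;> fin_cases k <;>
    first
      | exact Submodule.smul_mem _ _ (Submodule.subset_span (Set.mem_image_of_mem _ (by decide)))
      | (simp (config := { decide := true }) [dd, c840, e8, Pi.single_apply])

set_option maxHeartbeats 1000000 in
lemma f836_50 (h : ∀ i j : Fin 8, i < j → ⁅b i, b j⁆ = ∑ k, c836 i j k • b k) : ⁅b 5, b 0⁆ = b 0 := by
  rw [brkt b c836 h 5 0]
  simp (config := { decide := true }) [dd, c836, e8, Fin.sum_univ_eight, Pi.single_apply]
  try norm_num

set_option maxHeartbeats 1000000 in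
lemma f836_62 (h : ∀ i j : Fin 8, i < j → ⁅b i, b j⁆ = ∑ k, c836 i j k • b k) : ⁅b 6, b 2⁆ = b 1 := by
  rw [brkt b c836 h 6 2]
  simp (config := { decide := true }) [dd, c836, e8, Fin.sum_univ_eight, Pi.single_apply]
  try norm_num

set_option maxHeartbeats 1000000 in
lemma f836_16 (h : ∀ i j : Fin 8, i < j → ⁅b i, b j⁆ = ∑ k, c836 i j k • b k) : ⁅b 1, b 6⁆ = b 2 := by
  rw [brkt b c836 h 1 6]
  simp (config := { decide := true }) [dd, c836, e8, Fin.sum_univ_eight, Pi.single_apply]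
  try norm_num

set_option maxHeartbeats 1000000 in
lemma f836_01 (h : ∀ i j : Fin 8, i < j → ⁅b i, b j⁆ = ∑ k, c836 i j k • b k) : ⁅b 0, b 1⁆ = b 3 := by
  rw [brkt b c836 h 0 1]
  simp (config := { decide := true }) [dd, c836, e8, Fin.sum_univ_eight, Pi.single_apply]
  try norm_num

set_option maxHeartbeats 1000000 in
lemma f836_02 (h : ∀ i j : Fin 8, i < j → ⁅b i, b j⁆ = ∑ k, c836 i j k • b k) : ⁅b 0, b 2⁆ = b 4 := by
  rw [brkt b c836 h 0 2]
  simp (config := { decide := true }) [dd, c836, e8, Fin.sum_univ_eight, Pi.single_apply]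
  try norm_num

set_option maxHeartbeats 1000000 in
lemma f837_50 (h : ∀ i j : Fin 8, i < j → ⁅b i, b j⁆ = ∑ k, c837 i j k • b k) : ⁅b 5, b 0⁆ = b 0 := by
  rw [brkt b c837 h 5 0]
  simp (config := { decide := true }) [dd, c837, e8, Fin.sum_univ_eight, Pi.single_apply]
  try norm_num

set_option maxHeartbeats 1000000 in
lemma f837_51 (h : ∀ i j : Fin 8, i < j → ⁅b i, b j⁆ = ∑ k, c837 i j k • b k) : ⁅b 5, b 1⁆ = b 1 := by
  rw [brkt b c837 h 5 1]
  simp (config := { decide := true }) [dd, c837, e8, Fin.sum_univ_eight, Pi.single_apply]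
  try norm_num

set_option maxHeartbeats 1000000 in
lemma f837_73 (h : ∀ i j : Fin 8, i < j → ⁅b i, b j⁆ = ∑ k, c837 i j k • b k) : ⁅b 7, b 3⁆ = b 2 := by
  rw [brkt b c837 h 7 3]
  simp (config := { decide := true }) [dd, c837, e8, Fin.sum_univ_eight, Pi.single_apply]
  try norm_num

set_option maxHeartbeats 1000000 in
lemma f837_27 (h : ∀ i j : Fin 8, i < j → ⁅b i, b j⁆ = ∑ k, c837 i j k • b k) : ⁅b 2, b 7⁆ = b 3 := by
  rw [brkt b c837 h 2 7]
  simp (config := { decide := true }) [dd, c837, e8, Fin.sum_univ_eight, Pi.single_apply]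
  try norm_num

set_option maxHeartbeats 1000000 in
lemma f837_01 (h : ∀ i j : Fin 8, i < j → ⁅b i, b j⁆ = ∑ k, c837 i j k • b k) : ⁅b 0, b 1⁆ = b 4 := by
  rw [brkt b c837 h 0 1]
  simp (config := { decide := true }) [dd, c837, e8, Fin.sum_univ_eight, Pi.single_apply]
  try norm_num

set_option maxHeartbeats 1000000 in
lemma f838_50 (h : ∀ i j : Fin 8, i < j → ⁅b i, b j⁆ = ∑ k, c838 i j k • b k) : ⁅b 5, b 0⁆ = b 0 := by
  rw [brkt b c838 h 5 0]
  simp (config := { decide := true }) [dd, c838, e8, Fin.sum_univ_eight, Pi.single_apply]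
  try norm_num

set_option maxHeartbeats 1000000 in
lemma f838_51 (h : ∀ i j : Fin 8, i < j → ⁅b i, b j⁆ = ∑ k, c838 i j k • b k) : ⁅b 5, b 1⁆ = b 1 := by
  rw [brkt b c838 h 5 1]
  simp (config := { decide := true }) [dd, c838, e8, Fin.sum_univ_eight, Pi.single_apply]
  try norm_num

set_option maxHeartbeats 1000000 in
lemma f838_73 (h : ∀ i j : Fin 8, i < j → ⁅b i, b j⁆ = ∑ k, c838 i j k • b k) : ⁅b 7, b 3⁆ = b 2 := by
  rw [brkt b c838 h 7 3]
  simp (config := { decide := true }) [dd, c838, e8, Fin.sum_univ_eight, Pi.single_apply]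
  try norm_num

set_option maxHeartbeats 1000000 in
lemma f838_27 (h : ∀ i j : Fin 8, i < j → ⁅b i, b j⁆ = ∑ k, c838 i j k • b k) : ⁅b 2, b 7⁆ = b 3 := by
  rw [brkt b c838 h 2 7]
  simp (config := { decide := true }) [dd, c838, e8, Fin.sum_univ_eight, Pi.single_apply]
  try norm_num

set_option maxHeartbeats 1000000 in
lemma f838_01 (h : ∀ i j : Fin 8, i < j → ⁅b i, b j⁆ = ∑ k, c838 i j k • b k) : ⁅b 0, b 1⁆ = b 4 := by
  rw [brkt b c838 h 0 1]
  simp (config := { decide := true }) [dd, c838, e8, Fin.sum_univ_eight, Pi.single_apply]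
  try norm_num

set_option maxHeartbeats 1000000 in
lemma f839_60 (h : ∀ i j : Fin 8, i < j → ⁅b i, b j⁆ = ∑ k, c839 i j k • b k) : ⁅b 6, b 0⁆ = b 0 := by
  rw [brkt b c839 h 6 0]
  simp (config := { decide := true }) [dd, c839, e8, Fin.sum_univ_eight, Pi.single_apply]
  try norm_num

set_option maxHeartbeats 1000000 in
lemma f839_61 (h : ∀ i j : Fin 8, i < j → ⁅b i, b j⁆ = ∑ k, c839 i j k • b k) : ⁅b 6, b 1⁆ = b 1 := by
  rw [brkt b c839 h 6 1]
  simp (config := { decide := true }) [dd, c839, e8, Fin.sum_univ_eight, Pi.single_apply]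
  try norm_num

set_option maxHeartbeats 1000000 in
lemma f839_01 (h : ∀ i j : Fin 8, i < j → ⁅b i, b j⁆ = ∑ k, c839 i j k • b k) : ⁅b 0, b 1⁆ = b 2 := by
  rw [brkt b c839 h 0 1]
  simp (config := { decide := true }) [dd, c839, e8, Fin.sum_univ_eight, Pi.single_apply]
  try norm_num

set_option maxHeartbeats 1000000 in
lemma f839_02 (h : ∀ i j : Fin 8, i < j → ⁅b i, b j⁆ = ∑ k, c839 i j k • b k) : ⁅b 0, b 2⁆ = b 3 := by
  rw [brkt b c839 h 0 2]
  simp (config := { decide := true }) [dd, c839, e8, Fin.sum_univ_eight, Pi.single_apply]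
  try norm_num

set_option maxHeartbeats 1000000 in
lemma f839_03 (h : ∀ i j : Fin 8, i < j → ⁅b i, b j⁆ = ∑ k, c839 i j k • b k) : ⁅b 0, b 3⁆ = b 4 := by
  rw [brkt b c839 h 0 3]
  simp (config := { decide := true }) [dd, c839, e8, Fin.sum_univ_eight, Pi.single_apply]
  try norm_num

set_option maxHeartbeats 1000000 in
lemma f839_21 (h : ∀ i j : Fin 8, i < j → ⁅b i, b j⁆ = ∑ k, c839 i j k • b k) : ⁅b 2, b 1⁆ = b 5 := by
  rw [brkt b c839 h 2 1]
  simp (config := { decide := true }) [dd, c839, e8, Fin.sum_univ_eight, Pi.single_apply]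
  try norm_num

set_option maxHeartbeats 1000000 in
lemma f840_60 (h : ∀ i j : Fin 8, i < j → ⁅b i, b j⁆ = ∑ k, c840 i j k • b k) : ⁅b 6, b 0⁆ = b 0 := by
  rw [brkt b c840 h 6 0]
  simp (config := { decide := true }) [dd, c840, e8, Fin.sum_univ_eight, Pi.single_apply]
  try norm_num

set_option maxHeartbeats 1000000 in
lemma f840_61 (h : ∀ i j : Fin 8, i < j → ⁅b i, b j⁆ = ∑ k, c840 i j k • b k) : ⁅b 6, b 1⁆ = b 1 := by
  rw [brkt b c840 h 6 1]
  simp (config := { decide := true }) [dd, c840, e8, Fin.sum_univ_eight, Pi.single_apply]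
  try norm_num

set_option maxHeartbeats 1000000 in
lemma f840_62 (h : ∀ i j : Fin 8, i < j → ⁅b i, b j⁆ = ∑ k, c840 i j k • b k) : ⁅b 6, b 2⁆ = (2 : ℝ) • b 2 := by
  rw [brkt b c840 h 6 2]
  simp (config := { decide := true }) [dd, c840, e8, Fin.sum_univ_eight, Pi.single_apply]
  try norm_num

set_option maxHeartbeats 1000000 in
lemma f840_01 (h : ∀ i j : Fin 8, i < j → ⁅b i, b j⁆ = ∑ k, c840 i j k • b k) : ⁅b 0, b 1⁆ = b 3 := by
  rw [brkt b c840 h 0 1]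
  simp (config := { decide := true }) [dd, c840, e8, Fin.sum_univ_eight, Pi.single_apply]
  try norm_num

set_option maxHeartbeats 1000000 in
lemma f840_02 (h : ∀ i j : Fin 8, i < j → ⁅b i, b j⁆ = ∑ k, c840 i j k • b k) : ⁅b 0, b 2⁆ = b 4 := by
  rw [brkt b c840 h 0 2]
  simp (config := { decide := true }) [dd, c840, e8, Fin.sum_univ_eight, Pi.single_apply]
  try norm_num

set_option maxHeartbeats 1000000 in
lemma f840_03 (h : ∀ i j : Fin 8, i < j → ⁅b i, b j⁆ = ∑ k, c840 i j k • b k) : ⁅b 0, b 3⁆ = b 5 := by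
  rw [brkt b c840 h 0 3]
  simp (config := { decide := true }) [dd, c840, e8, Fin.sum_univ_eight, Pi.single_apply]
  try norm_num

set_option maxHeartbeats 1000000 in
lemma k834_22 (h : ∀ i j : Fin 8, i < j → ⁅b i, b j⁆ = ∑ k, c834 i j k • b k) : killingForm ℝ L (b 2) (b 2) = (-2 : ℝ) := by
  rw [killing_entry b c834 h]
  simp (config := { decide := true }) [dd, c834, e8, Fin.sum_univ_eight, Pi.single_apply]
  try norm_num

set_option maxHeartbeats 1000000 in
lemma k834_66 (h : ∀ i j : Fin 8, i < j → ⁅b i, b j⁆ = ∑ k, c834 i j k • b k) : killingForm ℝ L (b 6) (b 6) = (-2 : ℝ) := by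
  rw [killing_entry b c834 h]
  simp (config := { decide := true }) [dd, c834, e8, Fin.sum_univ_eight, Pi.single_apply]
  try norm_num

set_option maxHeartbeats 1000000 in
lemma k834_26 (h : ∀ i j : Fin 8, i < j → ⁅b i, b j⁆ = ∑ k, c834 i j k • b k) : killingForm ℝ L (b 2) (b 6) = (0 : ℝ) := by
  rw [killing_entry b c834 h]
  simp (config := { decide := true }) [dd, c834, e8, Fin.sum_univ_eight, Pi.single_apply]
  try norm_num

set_option maxHeartbeats 1000000 in
lemma k834_62 (h : ∀ i j : Fin 8, i < j → ⁅b i, b j⁆ = ∑ k, c834 i j k • b k) : killingForm ℝ L (b 6) (b 2) = (0 : ℝ) := by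
  rw [killing_entry b c834 h]
  simp (config := { decide := true }) [dd, c834, e8, Fin.sum_univ_eight, Pi.single_apply]
  try norm_num

set_option maxHeartbeats 1000000 in
lemma k838_55 (h : ∀ i j : Fin 8, i < j → ⁅b i, b j⁆ = ∑ k, c838 i j k • b k) : killingForm ℝ L (b 5) (b 5) = (6 : ℝ) := by
  rw [killing_entry b c838 h]
  simp (config := { decide := true }) [dd, c838, e8, Fin.sum_univ_eight, Pi.single_apply]
  try norm_num

set_option maxHeartbeats 1000000 in
lemma k838_66 (h : ∀ i j : Fin 8, i < j → ⁅b i, b j⁆ = ∑ k, c838 i j k • b k) : killingForm ℝ L (b 6) (b 6) = (2 : ℝ) := by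
  rw [killing_entry b c838 h]
  simp (config := { decide := true }) [dd, c838, e8, Fin.sum_univ_eight, Pi.single_apply]
  try norm_num

set_option maxHeartbeats 1000000 in
lemma k838_56 (h : ∀ i j : Fin 8, i < j → ⁅b i, b j⁆ = ∑ k, c838 i j k • b k) : killingForm ℝ L (b 5) (b 6) = (0 : ℝ) := by
  rw [killing_entry b c838 h]
  simp (config := { decide := true }) [dd, c838, e8, Fin.sum_univ_eight, Pi.single_apply]
  try norm_num

set_option maxHeartbeats 1000000 in
lemma k838_65 (h : ∀ i j : Fin 8, i < j → ⁅b i, b j⁆ = ∑ k, c838 i j k • b k) : killingForm ℝ L (b 6) (b 5) = (0 : ℝ) := by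
  rw [killing_entry b c838 h]
  simp (config := { decide := true }) [dd, c838, e8, Fin.sum_univ_eight, Pi.single_apply]
  try norm_num

set_option maxHeartbeats 1000000 in
lemma hyp835 (h : ∀ i j : Fin 8, i < j → ⁅b i, b j⁆ = ∑ k, c835 i j k • b k) (v : L)
    (hv : b.repr v 2 = 0) : 0 ≤ killingForm ℝ L v v := by
  rw [killing_qf b v]
  simp_rw [killing_entry b c835 h]
  simp only [Fin.sum_univ_eight]
  simp (config := { decide := true }) only [dd, c835, e8, Pi.single_apply, Prod.mk.injEq,
    if_true, if_false, Pi.neg_apply, Pi.zero_apply, Pi.smul_apply, smul_eq_mul]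
  norm_num [hv]
  nlinarith [sq_nonneg (b.repr v 3), sq_nonneg (b.repr v 4), sq_nonneg (b.repr v 6)]

set_option maxHeartbeats 1000000 in
lemma hyp837 (h : ∀ i j : Fin 8, i < j → ⁅b i, b j⁆ = ∑ k, c837 i j k • b k) (v : L)
    (hv : b.repr v 5 = 0) : killingForm ℝ L v v ≤ 0 := by
  rw [killing_qf b v]
  simp_rw [killing_entry b c837 h]
  simp only [Fin.sum_univ_eight]
  simp (config := { decide := true }) only [dd, c837, e8, Pi.single_apply, Prod.mk.injEq,
    if_true, if_false, Pi.neg_apply, Pi.zero_apply, Pi.smul_apply, smul_eq_mul]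
  norm_num [hv]
  nlinarith [sq_nonneg (b.repr v 6), sq_nonneg (b.repr v 7)]

lemma ub1_834 (h : ∀ i j : Fin 8, i < j → ⁅b i, b j⁆ = ∑ k, c834 i j k • b k) : finrank ℝ (sp1 L) ≤ 4 :=
  (finrank_sp1_le b ({0,1,4,5} : Finset (Fin 8)) (span1_c834 b h)).trans_eq (by decide)

lemma ub1_835 (h : ∀ i j : Fin 8, i < j → ⁅b i, b j⁆ = ∑ k, c835 i j k • b k) : finrank ℝ (sp1 L) ≤ 4 :=
  (finrank_sp1_le b ({0,1,5,7} : Finset (Fin 8)) (span1_c835 b h)).trans_eq (by decide)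

lemma ub1_836 (h : ∀ i j : Fin 8, i < j → ⁅b i, b j⁆ = ∑ k, c836 i j k • b k) : finrank ℝ (sp1 L) ≤ 5 :=
  (finrank_sp1_le b ({0,1,2,3,4} : Finset (Fin 8)) (span1_c836 b h)).trans_eq (by decide)

lemma ub1_837 (h : ∀ i j : Fin 8, i < j → ⁅b i, b j⁆ = ∑ k, c837 i j k • b k) : finrank ℝ (sp1 L) ≤ 5 :=
  (finrank_sp1_le b ({0,1,2,3,4} : Finset (Fin 8)) (span1_c837 b h)).trans_eq (by decide)

lemma ub1_838 (h : ∀ i j : Fin 8, i < j → ⁅b i, b j⁆ = ∑ k, c838 i j k • b k) : finrank ℝ (sp1 L) ≤ 5 :=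
  (finrank_sp1_le b ({0,1,2,3,4} : Finset (Fin 8)) (span1_c838 b h)).trans_eq (by decide)

lemma ub2_837 (h : ∀ i j : Fin 8, i < j → ⁅b i, b j⁆ = ∑ k, c837 i j k • b k) : finrank ℝ (sp2 L) ≤ 1 :=
  (finrank_sp2_le b ({0,1,2,3,4} : Finset (Fin 8)) ({4} : Finset (Fin 8))
    (span1_c837 b h) (span2_c837 b h)).trans_eq (by decide)

lemma ub2_838 (h : ∀ i j : Fin 8, i < j → ⁅b i, b j⁆ = ∑ k, c838 i j k • b k) : finrank ℝ (sp2 L) ≤ 1 :=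
  (finrank_sp2_le b ({0,1,2,3,4} : Finset (Fin 8)) ({4} : Finset (Fin 8))
    (span1_c838 b h) (span2_c838 b h)).trans_eq (by decide)

lemma ub2_840 (h : ∀ i j : Fin 8, i < j → ⁅b i, b j⁆ = ∑ k, c840 i j k • b k) : finrank ℝ (sp2 L) ≤ 3 :=
  (finrank_sp2_le b ({0,1,2,3,4,5} : Finset (Fin 8)) ({3,4,5} : Finset (Fin 8))
    (span1_c840 b h) (span2_c840 b h)).trans_eq (by decide)

lemma lb1_836 (h : ∀ i j : Fin 8, i < j → ⁅b i, b j⁆ = ∑ k, c836 i j k • b k) :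
    5 ≤ finrank ℝ (sp1 L) := by
  have m0 : b 0 ∈ sp1 L := Submodule.subset_span ⟨b 5, b 0, f836_50 b h⟩
  have m1 : b 1 ∈ sp1 L := Submodule.subset_span ⟨b 6, b 2, f836_62 b h⟩
  have m2 : b 2 ∈ sp1 L := Submodule.subset_span ⟨b 1, b 6, f836_16 b h⟩
  have m3 : b 3 ∈ sp1 L := Submodule.subset_span ⟨b 0, b 1, f836_01 b h⟩
  have m4 : b 4 ∈ sp1 L := Submodule.subset_span ⟨b 0, b 2, f836_02 b h⟩
  exact finrank_ge_of_mem b ![0,1,2,3,4] (by decide) fun i => by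
    fin_cases i
    exacts [m0, m1, m2, m3, m4]

lemma lb2_836 (h : ∀ i j : Fin 8, i < j → ⁅b i, b j⁆ = ∑ k, c836 i j k • b k) :
    2 ≤ finrank ℝ (sp2 L) := by
  have m0 : b 0 ∈ sp1 L := Submodule.subset_span ⟨b 5, b 0, f836_50 b h⟩
  have m1 : b 1 ∈ sp1 L := Submodule.subset_span ⟨b 6, b 2, f836_62 b h⟩
  have m2 : b 2 ∈ sp1 L := Submodule.subset_span ⟨b 1, b 6, f836_16 b h⟩
  have n3 : b 3 ∈ sp2 L := Submodule.subset_span ⟨b 0, m0, b 1, m1, f836_01 b h⟩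
  have n4 : b 4 ∈ sp2 L := Submodule.subset_span ⟨b 0, m0, b 2, m2, f836_02 b h⟩
  exact finrank_ge_of_mem b ![3,4] (by decide) fun i => by
    fin_cases i
    exacts [n3, n4]

lemma lb1_837 (h : ∀ i j : Fin 8, i < j → ⁅b i, b j⁆ = ∑ k, c837 i j k • b k) :
    5 ≤ finrank ℝ (sp1 L) := by
  have m0 : b 0 ∈ sp1 L := Submodule.subset_span ⟨b 5, b 0, f837_50 b h⟩
  have m1 : b 1 ∈ sp1 L := Submodule.subset_span ⟨b 5, b 1, f837_51 b h⟩
  have m2 : b 2 ∈ sp1 L := Submodule.subset_span ⟨b 7, b 3, f837_73 b h⟩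
  have m3 : b 3 ∈ sp1 L := Submodule.subset_span ⟨b 2, b 7, f837_27 b h⟩
  have m4 : b 4 ∈ sp1 L := Submodule.subset_span ⟨b 0, b 1, f837_01 b h⟩
  exact finrank_ge_of_mem b ![0,1,2,3,4] (by decide) fun i => by
    fin_cases i
    exacts [m0, m1, m2, m3, m4]

lemma lb1_838 (h : ∀ i j : Fin 8, i < j → ⁅b i, b j⁆ = ∑ k, c838 i j k • b k) :
    5 ≤ finrank ℝ (sp1 L) := by
  have m0 : b 0 ∈ sp1 L := Submodule.subset_span ⟨b 5, b 0, f838_50 b h⟩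
  have m1 : b 1 ∈ sp1 L := Submodule.subset_span ⟨b 5, b 1, f838_51 b h⟩
  have m2 : b 2 ∈ sp1 L := Submodule.subset_span ⟨b 7, b 3, f838_73 b h⟩
  have m3 : b 3 ∈ sp1 L := Submodule.subset_span ⟨b 2, b 7, f838_27 b h⟩
  have m4 : b 4 ∈ sp1 L := Submodule.subset_span ⟨b 0, b 1, f838_01 b h⟩
  exact finrank_ge_of_mem b ![0,1,2,3,4] (by decide) fun i => by
    fin_cases i
    exacts [m0, m1, m2, m3, m4]

lemma lb1_839 (h : ∀ i j : Fin 8, i < j → ⁅b i, b j⁆ = ∑ k, c839 i j k • b k) :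
    6 ≤ finrank ℝ (sp1 L) := by
  have m0 : b 0 ∈ sp1 L := Submodule.subset_span ⟨b 6, b 0, f839_60 b h⟩
  have m1 : b 1 ∈ sp1 L := Submodule.subset_span ⟨b 6, b 1, f839_61 b h⟩
  have m2 : b 2 ∈ sp1 L := Submodule.subset_span ⟨b 0, b 1, f839_01 b h⟩
  have m3 : b 3 ∈ sp1 L := Submodule.subset_span ⟨b 0, b 2, f839_02 b h⟩
  have m4 : b 4 ∈ sp1 L := Submodule.subset_span ⟨b 0, b 3, f839_03 b h⟩
  have m5 : b 5 ∈ sp1 L := Submodule.subset_span ⟨b 2, b 1, f839_21 b h⟩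
  exact finrank_ge_of_mem b ![0,1,2,3,4,5] (by decide) fun i => by
    fin_cases i
    exacts [m0, m1, m2, m3, m4, m5]

lemma lb2_839 (h : ∀ i j : Fin 8, i < j → ⁅b i, b j⁆ = ∑ k, c839 i j k • b k) :
    4 ≤ finrank ℝ (sp2 L) := by
  have m0 : b 0 ∈ sp1 L := Submodule.subset_span ⟨b 6, b 0, f839_60 b h⟩
  have m1 : b 1 ∈ sp1 L := Submodule.subset_span ⟨b 6, b 1, f839_61 b h⟩
  have m2 : b 2 ∈ sp1 L := Submodule.subset_span ⟨b 0, b 1, f839_01 b h⟩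
  have m3 : b 3 ∈ sp1 L := Submodule.subset_span ⟨b 0, b 2, f839_02 b h⟩
  have n2 : b 2 ∈ sp2 L := Submodule.subset_span ⟨b 0, m0, b 1, m1, f839_01 b h⟩
  have n3 : b 3 ∈ sp2 L := Submodule.subset_span ⟨b 0, m0, b 2, m2, f839_02 b h⟩
  have n4 : b 4 ∈ sp2 L := Submodule.subset_span ⟨b 0, m0, b 3, m3, f839_03 b h⟩
  have n5 : b 5 ∈ sp2 L := Submodule.subset_span ⟨b 2, m2, b 1, m1, f839_21 b h⟩
  exact finrank_ge_of_mem b ![2,3,4,5] (by decide) fun i => by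
    fin_cases i
    exacts [n2, n3, n4, n5]

lemma lb1_840 (h : ∀ i j : Fin 8, i < j → ⁅b i, b j⁆ = ∑ k, c840 i j k • b k) :
    6 ≤ finrank ℝ (sp1 L) := by
  have m0 : b 0 ∈ sp1 L := Submodule.subset_span ⟨b 6, b 0, f840_60 b h⟩
  have m1 : b 1 ∈ sp1 L := Submodule.subset_span ⟨b 6, b 1, f840_61 b h⟩
  have m2 : b 2 ∈ sp1 L := by
    have h2 : ((2 : ℝ)⁻¹) • ⁅b 6, b 2⁆ = b 2 := by
      rw [f840_62 b h, smul_smul]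
      norm_num
    exact h2 ▸ Submodule.smul_mem _ _ (Submodule.subset_span ⟨b 6, b 2, rfl⟩)
  have m3 : b 3 ∈ sp1 L := Submodule.subset_span ⟨b 0, b 1, f840_01 b h⟩
  have m4 : b 4 ∈ sp1 L := Submodule.subset_span ⟨b 0, b 2, f840_02 b h⟩
  have m5 : b 5 ∈ sp1 L := Submodule.subset_span ⟨b 0, b 3, f840_03 b h⟩
  exact finrank_ge_of_mem b ![0,1,2,3,4,5] (by decide) fun i => by
    fin_cases i
    exacts [m0, m1, m2, m3, m4, m5]

end PerAlgebra

theorem g834_to_g840_pairwise_nonisomorphic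
    {g₁ : Type} [LieRing g₁] [LieAlgebra ℝ g₁] (b₁ : Basis (Fin 8) ℝ g₁)
    (h₁ : ∀ i j : Fin 8, i < j → ⁅b₁ i, b₁ j⁆ = ∑ k, c834 i j k • b₁ k)
    {g₂ : Type} [LieRing g₂] [LieAlgebra ℝ g₂] (b₂ : Basis (Fin 8) ℝ g₂)
    (h₂ : ∀ i j : Fin 8, i < j → ⁅b₂ i, b₂ j⁆ = ∑ k, c835 i j k • b₂ k)
    {g₃ : Type} [LieRing g₃] [LieAlgebra ℝ g₃] (b₃ : Basis (Fin 8) ℝ g₃)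
    (h₃ : ∀ i j : Fin 8, i < j → ⁅b₃ i, b₃ j⁆ = ∑ k, c836 i j k • b₃ k)
    {g₄ : Type} [LieRing g₄] [LieAlgebra ℝ g₄] (b₄ : Basis (Fin 8) ℝ g₄)
    (h₄ : ∀ i j : Fin 8, i < j → ⁅b₄ i, b₄ j⁆ = ∑ k, c837 i j k • b₄ k)
    {g₅ : Type} [LieRing g₅] [LieAlgebra ℝ g₅] (b₅ : Basis (Fin 8) ℝ g₅)
    (h₅ : ∀ i j : Fin 8, i < j → ⁅b₅ i, b₅ j⁆ = ∑ k, c838 i j k • b₅ k)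
    {g₆ : Type} [LieRing g₆] [LieAlgebra ℝ g₆] (b₆ : Basis (Fin 8) ℝ g₆)
    (h₆ : ∀ i j : Fin 8, i < j → ⁅b₆ i, b₆ j⁆ = ∑ k, c839 i j k • b₆ k)
    {g₇ : Type} [LieRing g₇] [LieAlgebra ℝ g₇] (b₇ : Basis (Fin 8) ℝ g₇)
    (h₇ : ∀ i j : Fin 8, i < j → ⁅b₇ i, b₇ j⁆ = ∑ k, c840 i j k • b₇ k) :
    IsEmpty (g₁ ≃ₗ⁅ℝ⁆ g₂) ∧ IsEmpty (g₁ ≃ₗ⁅ℝ⁆ g₃) ∧ IsEmpty (g₁ ≃ₗ⁅ℝ⁆ g₄) ∧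
    IsEmpty (g₁ ≃ₗ⁅ℝ⁆ g₅) ∧ IsEmpty (g₁ ≃ₗ⁅ℝ⁆ g₆) ∧ IsEmpty (g₁ ≃ₗ⁅ℝ⁆ g₇) ∧
    IsEmpty (g₂ ≃ₗ⁅ℝ⁆ g₃) ∧ IsEmpty (g₂ ≃ₗ⁅ℝ⁆ g₄) ∧ IsEmpty (g₂ ≃ₗ⁅ℝ⁆ g₅) ∧
    IsEmpty (g₂ ≃ₗ⁅ℝ⁆ g₆) ∧ IsEmpty (g₂ ≃ₗ⁅ℝ⁆ g₇) ∧ IsEmpty (g₃ ≃ₗ⁅ℝ⁆ g₄) ∧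
    IsEmpty (g₃ ≃ₗ⁅ℝ⁆ g₅) ∧ IsEmpty (g₃ ≃ₗ⁅ℝ⁆ g₆) ∧ IsEmpty (g₃ ≃ₗ⁅ℝ⁆ g₇) ∧
    IsEmpty (g₄ ≃ₗ⁅ℝ⁆ g₅) ∧ IsEmpty (g₄ ≃ₗ⁅ℝ⁆ g₆) ∧ IsEmpty (g₄ ≃ₗ⁅ℝ⁆ g₇) ∧
    IsEmpty (g₅ ≃ₗ⁅ℝ⁆ g₆) ∧ IsEmpty (g₅ ≃ₗ⁅ℝ⁆ g₇) ∧ IsEmpty (g₆ ≃ₗ⁅ℝ⁆ g₇) := by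
  refine ⟨⟨fun e => killing_clash' e b₂ 2 (b₁ 2) (b₁ 6) (-2) (-2) (by norm_num) (by norm_num)
      (k834_22 b₁ h₁) (k834_26 b₁ h₁) (k834_62 b₁ h₁) (k834_66 b₁ h₁) (hyp835 b₂ h₂)⟩,
    ⟨fun e => clash1 e (ub1_834 b₁ h₁) (lb1_836 b₃ h₃) (by norm_num)⟩,
    ⟨fun e => clash1 e (ub1_834 b₁ h₁) (lb1_837 b₄ h₄) (by norm_num)⟩,
    ⟨fun e => clash1 e (ub1_834 b₁ h₁) (lb1_838 b₅ h₅) (by norm_num)⟩,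
    ⟨fun e => clash1 e (ub1_834 b₁ h₁) (lb1_839 b₆ h₆) (by norm_num)⟩,
    ⟨fun e => clash1 e (ub1_834 b₁ h₁) (lb1_840 b₇ h₇) (by norm_num)⟩,
    ⟨fun e => clash1 e (ub1_835 b₂ h₂) (lb1_836 b₃ h₃) (by norm_num)⟩,
    ⟨fun e => clash1 e (ub1_835 b₂ h₂) (lb1_837 b₄ h₄) (by norm_num)⟩,
    ⟨fun e => clash1 e (ub1_835 b₂ h₂) (lb1_838 b₅ h₅) (by norm_num)⟩,
    ⟨fun e => clash1 e (ub1_835 b₂ h₂) (lb1_839 b₆ h₆) (by norm_num)⟩,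
    ⟨fun e => clash1 e (ub1_835 b₂ h₂) (lb1_840 b₇ h₇) (by norm_num)⟩,
    ⟨fun e => clash2 e.symm (ub2_837 b₄ h₄) (lb2_836 b₃ h₃) (by norm_num)⟩,
    ⟨fun e => clash2 e.symm (ub2_838 b₅ h₅) (lb2_836 b₃ h₃) (by norm_num)⟩,
    ⟨fun e => clash1 e (ub1_836 b₃ h₃) (lb1_839 b₆ h₆) (by norm_num)⟩,
    ⟨fun e => clash1 e (ub1_836 b₃ h₃) (lb1_840 b₇ h₇) (by norm_num)⟩,
    ⟨fun e => killing_clash e.symm b₄ 5 (b₅ 5) (b₅ 6) 6 2 (by norm_num) (by norm_num)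
      (k838_55 b₅ h₅) (k838_56 b₅ h₅) (k838_65 b₅ h₅) (k838_66 b₅ h₅) (hyp837 b₄ h₄)⟩,
    ⟨fun e => clash1 e (ub1_837 b₄ h₄) (lb1_839 b₆ h₆) (by norm_num)⟩,
    ⟨fun e => clash1 e (ub1_837 b₄ h₄) (lb1_840 b₇ h₇) (by norm_num)⟩,
    ⟨fun e => clash1 e (ub1_838 b₅ h₅) (lb1_839 b₆ h₆) (by norm_num)⟩,
    ⟨fun e => clash1 e (ub1_838 b₅ h₅) (lb1_840 b₇ h₇) (by norm_num)⟩,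
    ⟨fun e => clash2 e.symm (ub2_840 b₇ h₇) (lb2_839 b₆ h₆) (by norm_num)⟩⟩
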